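/- Let G be a finite group and A a field. Then the dimension of the A-vector space Inn(A[G]) of inner derivations of A[G] equals |G| − |G^G|, the order of G minus the number of conjugacy classes of G. -/

import Mathlib

open MonoidAlgebra

/-- The A-submodule of inner derivations of the group ring `A[G]`, inside the
`A`-module of all `A`-linear endomorphisms of `A[G]`. -/
def innDer (A G : Type) [CommRing A] [Group G] :
    Submodule A (MonoidAlgebra A G →ₗ[A] MonoidAlgebra A G) where
  carrier := {d | ∃ a : MonoidAlgebra A G, ∀ x : MonoidAlgebra A G, d x = a * x - x * a}
  add_mem' := by
    rintro d e ⟨a, ha⟩ ⟨b, hb⟩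
    refine ⟨a + b, fun x => ?_⟩
    simp only [LinearMap.add_apply, ha x, hb x, add_mul, mul_add]
    abel
  zero_mem' := ⟨0, fun x => by simp⟩
  smul_mem' := by
    rintro c d ⟨a, ha⟩
    refine ⟨c • a, fun x => ?_⟩
    simp only [LinearMap.smul_apply, ha x, smul_sub, smul_mul_assoc, mul_smul_comm]

/-! Inner derivations are the image of `ad : a ↦ (x ↦ a x - x a)`, whose kernel is the centre of
`A[G]`. An element of `A[G]` is central iff its coefficient function is constant on conjugacy
classes, so the centre has dimension `|G^G|`, and rank–nullity gives `|G| - |G^G|`. -/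

noncomputable def ad (A R : Type*) [CommRing A] [Ring R] [Algebra A R] : R →ₗ[A] Module.End A R :=
  LinearMap.mul A R - (LinearMap.mul A R).flip

@[simp]
theorem ad_apply {A R : Type*} [CommRing A] [Ring R] [Algebra A R] (a x : R) :
    ad A R a x = a * x - x * a :=
  rfl

theorem innDer_eq_range_ad (A G : Type) [CommRing A] [Group G] :
    innDer A G = LinearMap.range (ad A (MonoidAlgebra A G)) := by
  ext d
  constructor
  · rintro ⟨a, ha⟩
    exact ⟨a, LinearMap.ext fun x => (ha x).symm⟩
  · rintro ⟨a, rfl⟩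
    exact ⟨a, ad_apply a⟩

theorem ker_ad_eq_center (A R : Type*) [CommRing A] [Ring R] [Algebra A R] :
    LinearMap.ker (ad A R) = Subalgebra.toSubmodule (Subalgebra.center A R) := by
  ext a
  simp [Subalgebra.mem_center_iff, LinearMap.ext_iff, sub_eq_zero, eq_comm]

theorem mem_range_funLeft_conjClassesMk_iff {M G : Type*} [Semiring M] [Group G] (f : G → M) :
    f ∈ LinearMap.range (LinearMap.funLeft M M (ConjClasses.mk : G → ConjClasses G)) ↔
      ∀ g h, f (g * h * g⁻¹) = f h := by
  constructor
  · rintro ⟨φ, rfl⟩ g h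
    exact congrArg φ (ConjClasses.mk_eq_mk_iff_isConj.mpr (isConj_iff.mpr ⟨g, rfl⟩).symm)
  · intro hf
    refine ⟨fun c => f c.out, funext fun g => ?_⟩
    obtain ⟨c, hc⟩ :=
      isConj_iff.mp (ConjClasses.mk_eq_mk_iff_isConj.mp (Quotient.out_eq (ConjClasses.mk g)))
    exact (hf c _).symm.trans (congrArg f hc)

theorem MonoidAlgebra.mem_center_iff_coeff_conj {A G : Type*} [CommSemiring A] [Group G]
    (a : MonoidAlgebra A G) :
    a ∈ Subalgebra.center A (MonoidAlgebra A G) ↔ ∀ g h, a.coeff (g * h * g⁻¹) = a.coeff h := by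
  rw [Subalgebra.mem_center_iff]
  constructor
  · intro ha g h
    simpa using congrArg (·.coeff (g * h)) (ha (single g 1)).symm
  · intro ha b
    induction b using MonoidAlgebra.induction_linear with
    | zero => simp
    | add b c hb hc => rw [add_mul, mul_add, hb, hc]
    | single g r =>
      ext h
      simpa [mul_comm r] using congrArg (· * r) (ha g (g⁻¹ * h)).symm

theorem MonoidAlgebra.map_center_eq_range_funLeft (A G : Type*) [CommSemiring A] [Group G]
    [Finite G] :
    (Subalgebra.toSubmodule (Subalgebra.center A (MonoidAlgebra A G))).map
        ((coeffLinearEquiv A).trans (Finsupp.linearEquivFunOnFinite A A G) :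
          MonoidAlgebra A G →ₗ[A] G → A) =
      LinearMap.range (LinearMap.funLeft A A (ConjClasses.mk : G → ConjClasses G)) := by
  ext f
  rw [Submodule.mem_map_equiv, mem_range_funLeft_conjClassesMk_iff]
  simp [mem_center_iff_coeff_conj]

theorem MonoidAlgebra.finrank_center (A G : Type*) [Field A] [Group G] [Finite G] :
    Module.finrank A (Subalgebra.center A (MonoidAlgebra A G)) = Nat.card (ConjClasses G) := by
  rw [← Subalgebra.finrank_toSubmodule, ← LinearEquiv.finrank_map_eq
      ((coeffLinearEquiv A).trans (Finsupp.linearEquivFunOnFinite A A G)),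
    map_center_eq_range_funLeft, LinearMap.finrank_range_of_inj
      (LinearMap.funLeft_injective_of_surjective _ _ _ ConjClasses.mk_surjective),
    Module.finrank_eq_nat_card_basis (Pi.basisFun A (ConjClasses G))]

/-- For a finite group `G` and a field `A`, the dimension of the space of inner
derivations of `A[G]` is `|G| − |G^G|`, the order of `G` minus the number of conjugacy
classes of `G`. -/
theorem innDer_finrank
    (A G : Type) [Field A] [Group G] [Finite G] :
    Module.finrank A ↥(innDer A G) = Nat.card G - Nat.card (ConjClasses G) := by
  have : Module.Finite A (MonoidAlgebra A G) := .of_basis (MonoidAlgebra.basis G A)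
  have rank_nullity := LinearMap.finrank_range_add_finrank_ker (ad A (MonoidAlgebra A G))
  rw [ker_ad_eq_center, Subalgebra.finrank_toSubmodule, MonoidAlgebra.finrank_center,
    Module.finrank_eq_nat_card_basis (MonoidAlgebra.basis G A)] at rank_nullity
  rw [innDer_eq_range_ad]
  exact Nat.eq_sub_of_add_eq rank_nullity
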